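/- There exists a first-order formula σ(x, y) with two free variables over the language with a single binary relation symbol such that for every dimension n ≥ 1 and all partial instances e, e' of dimension n, the structure A_n ⊨ σ(e, e') if and only if e_⊥ = e'_⊥, i.e., the sets of undefined features of e and e' coincide. -/

import Mathlib

/-!
In `A_n` the bottom element is definable (it lies below everything), hence so are the atoms, the
minimal elements above it; these are the instances defined at exactly one feature. Two atoms sit
on the same feature iff they are equal or have no common upper bound. So `e_⊥ ⊆ e'_⊥` is
expressed by: every atom below `e'` has an atom on the same feature below `e`.
-/

open FirstOrder FirstOrder.Language

abbrev PI (n : ℕ) : Type := Fin n → Option Bool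

def Subs {n : ℕ} (e e' : PI n) : Prop := ∀ i, e i ≠ none → e' i = e i

/-- The language with a single binary relation symbol. -/
def subLang : Language where
  Functions _ := Empty
  Relations n := match n with
    | 2 => Unit
    | _ => Empty

/-- The structure `A_n`: partial instances of dimension `n` with subsumption `⊑`. -/
instance subStruct (n : ℕ) : subLang.Structure (PI n) where
  funMap := fun {_} f => f.elim
  RelMap := fun {k} r v => match k, r with
    | 2, _ => Subs (v 0) (v 1)

namespace Subs

variable {n : ℕ}

theorem trans {e₁ e₂ e₃ : PI n} (h₁₂ : Subs e₁ e₂) (h₂₃ : Subs e₂ e₃) : Subs e₁ e₃ :=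
  fun i hi => (h₂₃ i (h₁₂ i hi ▸ hi)).trans (h₁₂ i hi)

theorem antisymm {e e' : PI n} (h : Subs e e') (h' : Subs e' e) : e = e' := by
  funext i
  by_cases hi : e i = none
  · by_cases hi' : e' i = none
    · rw [hi, hi']
    · exact h' i hi'
  · exact (h i hi).symm

end Subs

section Atoms

variable {n : ℕ}

theorem forall_subs_iff (e : PI n) : (∀ w, Subs e w) ↔ ∀ i, e i = none := by
  refine ⟨fun h i => ?_, fun h _ i hi => absurd (h i) hi⟩
  by_contra hi
  exact hi (h (fun _ => none) i hi).symm

def atom (i : Fin n) (b : Bool) : PI n := Function.update (fun _ => none) i (some b)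

theorem atom_apply_ne_none_iff {i j : Fin n} {b : Bool} : atom i b j ≠ none ↔ j = i := by
  by_cases h : j = i <;> simp [atom, h]

theorem atom_subs_iff {i : Fin n} {b : Bool} {e : PI n} : Subs (atom i b) e ↔ e i = some b := by
  refine ⟨fun h => by simpa [atom] using h i (by simp [atom]), fun h j hj => ?_⟩
  obtain rfl := atom_apply_ne_none_iff.mp hj
  simpa [atom] using h

theorem exists_eq_atom_iff (a : PI n) :
    (∃ i b, a = atom i b) ↔
      (¬∀ i, a i = none) ∧ ∀ z, Subs z a → (∀ i, z i = none) ∨ z = a := by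
  constructor
  · rintro ⟨i, b, rfl⟩
    refine ⟨fun h => by simpa [atom] using h i, fun z hz => or_iff_not_imp_left.mpr fun hz₀ => ?_⟩
    push Not at hz₀
    obtain ⟨j, hj⟩ := hz₀
    obtain ⟨c, hc⟩ := Option.ne_none_iff_exists'.mp hj
    have hji : atom i b j = some c := by
      simpa [atom] using (Subs.trans (atom_subs_iff.mpr hc) hz) j (by simp [atom])
    obtain rfl : j = i := (atom_apply_ne_none_iff (b := b)).mp (by simp [hji])
    have hcb : c = b := by simpa [atom] using hji.symm
    subst hcb
    exact hz.antisymm (atom_subs_iff.mpr hc)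
  · rintro ⟨ha₀, hmin⟩
    push Not at ha₀
    obtain ⟨i, hi⟩ := ha₀
    obtain ⟨b, hb⟩ := Option.ne_none_iff_exists'.mp hi
    refine ⟨i, b, ?_⟩
    rcases hmin _ (atom_subs_iff.mpr hb) with h | h
    · simpa [atom] using h i
    · exact h.symm

def Compatible (x y : PI n) : Prop := ∃ z, Subs x z ∧ Subs y z

theorem atom_eq_or_not_compatible_iff {i i' : Fin n} {b b' : Bool} :
    atom i b = atom i' b' ∨ ¬Compatible (atom i b) (atom i' b') ↔ i = i' := by
  constructor
  · rintro (h | h)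
    · exact atom_apply_ne_none_iff.mp (h ▸ (by simp [atom] : atom i b i ≠ none))
    · by_contra hne
      refine h ⟨Function.update (atom i b) i' (some b'), atom_subs_iff.mpr ?_, atom_subs_iff.mpr ?_⟩
      · simp [atom, Function.update_of_ne hne]
      · simp
  · rintro rfl
    by_cases hb : b = b'
    · exact Or.inl (hb ▸ rfl)
    · refine Or.inr fun ⟨z, hz, hz'⟩ => hb ?_
      simpa [atom_subs_iff.mp hz] using atom_subs_iff.mp hz'

end Atoms

section Formulas

variable {α : Type*} {k n : ℕ}

def subsRel : subLang.Relations 2 := ()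

def subsF (t u : subLang.Term (α ⊕ Fin k)) : subLang.BoundedFormula α k :=
  subsRel.boundedFormula₂ t u

@[simp]
theorem realize_subsF (t u : subLang.Term (α ⊕ Fin k)) (v : α → PI n) (xs : Fin k → PI n) :
    (subsF t u).Realize v xs ↔ Subs (t.realize (Sum.elim v xs)) (u.realize (Sum.elim v xs)) :=
  Iff.rfl

def isBotF (i : Fin k) : subLang.BoundedFormula α k :=
  ∀' subsF &i.castSucc &(Fin.last k)

@[simp]
theorem realize_isBotF (i : Fin k) (v : α → PI n) (xs : Fin k → PI n) :
    (isBotF i).Realize v xs ↔ ∀ j, xs i j = none := by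
  simp [isBotF, forall_subs_iff]

def isAtomF (i : Fin k) : subLang.BoundedFormula α k :=
  ∼(isBotF i) ⊓
    ∀' (subsF &(Fin.last k) &i.castSucc ⟹ isBotF (Fin.last k) ⊔ (&(Fin.last k) =' &i.castSucc))

@[simp]
theorem realize_isAtomF (i : Fin k) (v : α → PI n) (xs : Fin k → PI n) :
    (isAtomF i).Realize v xs ↔ ∃ j b, xs i = atom j b := by
  rw [exists_eq_atom_iff]
  simp only [isAtomF, BoundedFormula.realize_inf, BoundedFormula.realize_not, realize_isBotF,
    BoundedFormula.realize_all, BoundedFormula.realize_imp, realize_subsF,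
    BoundedFormula.realize_sup, BoundedFormula.realize_bdEqual, Term.realize_var, Function.comp,
    Sum.elim_inr, Fin.snoc_castSucc, Fin.snoc_last]

def sameFeatureF (i j : Fin k) : subLang.BoundedFormula α k :=
  (&i =' &j) ⊔ ∼(∃' (subsF &i.castSucc &(Fin.last k) ⊓ subsF &j.castSucc &(Fin.last k)))

@[simp]
theorem realize_sameFeatureF (i j : Fin k) (v : α → PI n) (xs : Fin k → PI n) :
    (sameFeatureF i j).Realize v xs ↔ xs i = xs j ∨ ¬Compatible (xs i) (xs j) := by
  simp [sameFeatureF, Compatible]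

end Formulas

section Undefined

variable {α : Type*} {n : ℕ}

def undefSubsetF (x y : α) : subLang.Formula α :=
  ∀' (isAtomF (Fin.last 0) ⊓ subsF &(Fin.last 0) (Term.var (Sum.inl y)) ⟹
    ∃' (isAtomF (Fin.last 1) ⊓ subsF &(Fin.last 1) (Term.var (Sum.inl x)) ⊓
      sameFeatureF (Fin.last 0).castSucc (Fin.last 1)))

theorem realize_undefSubsetF (x y : α) (v : α → PI n) :
    (undefSubsetF x y).Realize v ↔ {i | v x i = none} ⊆ {i | v y i = none} := by
  simp only [undefSubsetF, Formula.Realize, BoundedFormula.realize_all, BoundedFormula.realize_imp,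
    BoundedFormula.realize_inf, BoundedFormula.realize_ex, realize_isAtomF, realize_subsF,
    realize_sameFeatureF, Term.realize_var, Sum.elim_inl, Sum.elim_inr, Function.comp,
    Fin.snoc_castSucc, Fin.snoc_last, and_imp, forall_exists_index]
  constructor
  · intro h i hx
    by_contra hy
    obtain ⟨b, hb⟩ := Option.ne_none_iff_exists'.mp hy
    obtain ⟨c, ⟨⟨j, b', rfl⟩, hc⟩, hsame⟩ := h _ i b rfl (atom_subs_iff.mpr hb)
    obtain rfl := atom_eq_or_not_compatible_iff.mp hsame
    simp [atom_subs_iff.mp hc] at hx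
  · rintro h a i b rfl hb
    have hx : v x i ≠ none := fun hx => by simpa [atom_subs_iff.mp hb] using h hx
    obtain ⟨b', hb'⟩ := Option.ne_none_iff_exists'.mp hx
    exact ⟨atom i b', ⟨⟨i, b', rfl⟩, atom_subs_iff.mpr hb'⟩, atom_eq_or_not_compatible_iff.mpr rfl⟩

end Undefined

theorem stmt10 :
    ∃ σ : subLang.Formula (Fin 2),
      ∀ (n : ℕ), 1 ≤ n → ∀ (e e' : PI n),
        (σ.Realize ![e, e'] ↔ {i | e i = none} = {i | e' i = none}) := by
  refine ⟨undefSubsetF 0 1 ⊓ undefSubsetF 1 0, fun n _ e e' => ?_⟩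
  simp only [Formula.realize_inf, realize_undefSubsetF]
  exact (Set.Subset.antisymm_iff).symm
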